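/- arXiv:1512.01744 — 5 statements merged into one kernel-verified Lean document; each statement's English description precedes it below -/
import Mathlib

section
/- Let G be a group that is Jordan with index J and such that every finite abelian subgroup of G can be generated by at most m elements. Let H be a subgroup of G and N a positive integer such that every element of finite order in H has order at most N. Then every finite subgroup B of H satisfies |B| ≤ J · N^m. In particular, H is bounded. -/
/-- A group `G` is Jordan with index `J` if every finite subgroup `B` of `G` contains an
abelian subgroup `A` that is normal in `B` and of index `[B:A] ≤ J`. -/
def IsJordanWithIndex (G : Type*) [Group G] (J : ℕ) : Prop :=
  ∀ B : Subgroup G, Finite B →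
    ∃ A : Subgroup G, A ≤ B ∧ (∀ a ∈ A, ∀ b ∈ A, a * b = b * a) ∧
      (A.subgroupOf B).Normal ∧ A.relIndex B ≤ J

/-- Every finite abelian subgroup of `G` can be generated by at most `m` elements. -/
def HasAbelianRankBound (G : Type*) [Group G] (m : ℕ) : Prop :=
  ∀ A : Subgroup G, Finite A → (∀ a ∈ A, ∀ b ∈ A, a * b = b * a) →
    ∃ S : Finset G, S.card ≤ m ∧ Subgroup.closure (S : Set G) = A

/-!
By the Jordan property a finite subgroup `B ≤ H` has an abelian subgroup `A` of index at most
`J`. `A` is generated by at most `m` commuting elements, each of order at most `N`, so `A` is a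
product of at most `m` cyclic groups of order at most `N`, whence `|A| ≤ N ^ m`.
-/

open Subgroup Pointwise

lemma Subgroup.card_closure_le_prod_orderOf {G : Type*} [Group G] (S : Finset G)
    (hS : ∀ a ∈ S, ∀ b ∈ S, Commute a b) :
    Nat.card (closure (S : Set G)) ≤ ∏ s ∈ S, orderOf s := by
  classical
  induction S using Finset.induction_on with
  | empty => simp
  | @insert x T hx ih =>
    have hxT : zpowers x ≤ normalizer (closure (T : Set G) : Set G) := by
      refine le_trans ?_ (centralizer_le_normalizer _)
      rw [zpowers_le, centralizer_closure]
      exact fun t ht => (hS x (Finset.mem_insert_self x T) t (Finset.mem_insert_of_mem ht)).symm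
    rw [Finset.coe_insert, Set.insert_eq, closure_union, ← zpowers_eq_closure,
      Finset.prod_insert hx]
    calc Nat.card (zpowers x ⊔ closure (T : Set G) : Subgroup G)
        = Nat.card ((zpowers x : Set G) * (closure (T : Set G) : Set G)) := by
          rw [← coe_mul_of_left_le_normalizer_right _ _ hxT]; rfl
      _ ≤ Nat.card (zpowers x) * Nat.card (closure (T : Set G)) := Set.natCard_mul_le
      _ ≤ orderOf x * ∏ s ∈ T, orderOf s := by
          rw [Nat.card_zpowers]
          exact Nat.mul_le_mul_left _
            (ih fun a ha b hb => hS a (by simp [ha]) b (by simp [hb]))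

lemma Subgroup.card_closure_le_pow {G : Type*} [Group G] {S : Finset G} {N : ℕ}
    (hS : ∀ a ∈ S, ∀ b ∈ S, Commute a b) (hord : ∀ s ∈ S, orderOf s ≤ N) :
    Nat.card (closure (S : Set G)) ≤ N ^ S.card :=
  (card_closure_le_prod_orderOf S hS).trans (Finset.prod_le_pow_card _ _ _ hord)

theorem stmt0_general {G : Type*} [Group G] {J m N : ℕ} (hN : 0 < N)
    (hJordan : IsJordanWithIndex G J) (hrank : HasAbelianRankBound G m)
    (H : Subgroup G) (hH : ∀ h ∈ H, IsOfFinOrder h → orderOf h ≤ N) :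
    ∀ B : Subgroup G, B ≤ H → Finite B → Nat.card B ≤ J * N ^ m := by
  intro B hBH hB
  obtain ⟨A, hAB, hAcomm, -, hindex⟩ := hJordan B hB
  have hA : Finite A := Finite.of_injective _ (inclusion_injective hAB)
  obtain ⟨S, hSm, rfl⟩ := hrank A hA hAcomm
  have hord : ∀ s ∈ S, orderOf s ≤ N := fun s hs =>
    have hsA : s ∈ closure (S : Set G) := subset_closure hs
    hH s (hBH (hAB hsA)) (Submonoid.isOfFinOrder_coe.mpr
      (isOfFinOrder_of_finite (⟨s, hsA⟩ : closure (S : Set G))))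
  have hcomm : ∀ a ∈ S, ∀ b ∈ S, Commute a b := fun a ha b hb =>
    hAcomm a (subset_closure ha) b (subset_closure hb)
  calc Nat.card B = Nat.card (closure (S : Set G)) * (closure (S : Set G)).relIndex B := by
        simpa only [relIndex_bot_left] using (relIndex_mul_relIndex ⊥ _ B bot_le hAB).symm
    _ ≤ N ^ m * J :=
        Nat.mul_le_mul ((card_closure_le_pow hcomm hord).trans (Nat.pow_le_pow_right hN hSm))
          hindex
    _ = J * N ^ m := mul_comm _ _

/-- Let `G` be a group that is Jordan with index `J` and such that every
finite abelian subgroup of `G` can be generated by at most `m` elements. Let `H` be a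
subgroup of `G` and `N` a positive integer such that every element of finite order in `H`
has order at most `N`. Then every finite subgroup `B` of `H` satisfies `|B| ≤ J * N ^ m`;
in particular, `H` is bounded. -/
theorem stmt0 {G : Type*} [Group G] {J m N : ℕ} (hJ : 0 < J) (hm : 0 < m) (hN : 0 < N)
    (hJordan : IsJordanWithIndex G J) (hrank : HasAbelianRankBound G m)
    (H : Subgroup G) (hH : ∀ h ∈ H, IsOfFinOrder h → orderOf h ≤ N) :
    ∀ B : Subgroup G, B ≤ H → Finite B → Nat.card B ≤ J * N ^ m :=
  stmt0_general hN hJordan hrank H hH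
end

section
/- For all positive integers n and N there exists a positive integer 𝐍 = 𝐍(n,N), depending only on n and N, with the following property: for every field K of characteristic zero and every subgroup H of GL(n,K) such that every element of finite order in H has order at most N, every finite subgroup of H has order at most 𝐍. In particular, H is bounded. -/
/-!
Every element of a finite subgroup `B` of `H` has order at most `N`, so `g ^ N! = 1` on `B`, and
Burnside's trace argument bounds any subgroup of `GL(n, K)` of exponent dividing `e = N!` by
`(e ^ n) ^ (n ^ 2)`. The trace of an element of `B` is a sum of `n` `e`-th roots of unity, so it
takes at most `e ^ n` values. An element `g ∈ B` is determined by the traces `tr (g x)`, `x ∈ B`: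
if `h ∈ B` gives the same traces, then `u = h⁻¹ g` has `tr (u ^ k) = n` for all `k`, which forces
`u = 1` in characteristic zero. By linearity these traces are determined by their values on a
basis of the span of `B`, which has at most `n ^ 2` elements.
-/

open Polynomial Finset
open scoped Pointwise

theorem Multiset.sum_mem_card_nsmul {α : Type*} [DecidableEq α] [AddCommMonoid α] {s : Finset α}
    {z : Multiset α} (hz : ∀ a ∈ z, a ∈ s) : z.sum ∈ Multiset.card z • s := by
  induction z using Multiset.induction_on with
  | empty => simp
  | cons a z ih =>
    rw [Multiset.sum_cons, Multiset.card_cons, succ_nsmul']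
    exact add_mem_add (hz a (Multiset.mem_cons_self a z))
      (ih fun b hb => hz b (Multiset.mem_cons_of_mem hb))

theorem Polynomial.card_nthRootsFinset_le {R : Type*} [CommRing R] [IsDomain R] (L : ℕ) (a : R) :
    #(nthRootsFinset L a) ≤ L := by
  classical
  rw [nthRootsFinset]
  exact (Multiset.toFinset_card_le _).trans (card_nthRoots L a)

namespace Matrix

variable {ι K : Type*} [Fintype ι] [DecidableEq ι] [Field K]

theorem eq_zero_of_isIdempotentElem_of_trace_eq_zero [CharZero K] {P : Matrix ι ι K}
    (hP : IsIdempotentElem P) (htr : P.trace = 0) : P = 0 := by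
  apply toLin'.injective
  rw [map_zero]
  exact LinearMap.IsIdempotentElem.eq_zero_of_trace_eq_zero (hP.map toLinAlgEquiv')
    (by rwa [trace_toLin'_eq])

/-- Averaging the powers of `u` gives an idempotent fixed by `u` whose trace is the mean of the
traces of the powers; with all those traces equal to the size of the matrix, it must be `1`. -/
theorem eq_one_of_pow_eq_one_of_trace_pow [CharZero K] {u : Matrix ι ι K} {L : ℕ} (hL : 0 < L)
    (hu : u ^ L = 1) (htr : ∀ k, (u ^ k).trace = Fintype.card ι) : u = 1 := by
  set S := ∑ k ∈ range L, u ^ k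
  have huS : u * S = S := by
    rw [← sub_eq_zero, ← sub_one_mul, mul_geom_sum, hu, sub_self]
  have hpowS : ∀ k, u ^ k * S = S := fun k => by
    induction k with
    | zero => rw [pow_zero, one_mul]
    | succ k ih => rw [pow_succ, mul_assoc, huS, ih]
  have hL' : (L : K) ≠ 0 := Nat.cast_ne_zero.mpr hL.ne'
  set P := (L : K)⁻¹ • S
  have huP : u * P = P := by rw [mul_smul_comm, huS]
  have hP : IsIdempotentElem P := by
    have hSS : S * S = (L : K) • S := by
      rw [sum_mul, sum_congr rfl fun k _ => hpowS k, sum_const, card_range, Nat.cast_smul_eq_nsmul]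
    rw [IsIdempotentElem, smul_mul_smul_comm, hSS, smul_smul, mul_assoc, inv_mul_cancel₀ hL',
      mul_one]
  have htrP : P.trace = Fintype.card ι := by
    rw [trace_smul, trace_sum, sum_congr rfl fun k _ => htr k, sum_const, card_range,
      nsmul_eq_mul, smul_eq_mul, inv_mul_cancel_left₀ hL']
  have hP1 : P = 1 := by
    refine (sub_eq_zero.mp (eq_zero_of_isIdempotentElem_of_trace_eq_zero hP.one_sub ?_)).symm
    rw [trace_sub, trace_one, htrP, sub_self]
  rw [← mul_one u, ← hP1, huP]

theorem pow_eq_one_of_mem_spectrum {F : Type*} [Field F] {m : Matrix ι ι F}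
    {L : ℕ} (hm : m ^ L = 1) {μ : F} (hμ : μ ∈ spectrum F m) : μ ^ L = 1 := by
  cases subsingleton_or_nontrivial (Matrix ι ι F)
  · simp [spectrum.of_subsingleton] at hμ
  · simpa [hm, spectrum.one_eq] using spectrum.pow_mem_pow m L hμ

theorem trace_mem_nsmul_nthRootsFinset {F : Type*} [Field F] [IsAlgClosed F] [DecidableEq F]
    {m : Matrix ι ι F} {L : ℕ} (hL : 0 < L) (hm : m ^ L = 1) :
    m.trace ∈ Fintype.card ι • nthRootsFinset L (1 : F) := by
  have hsplits : m.charpoly.Splits := IsAlgClosed.splits m.charpoly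
  have hcard : Multiset.card m.charpoly.roots = Fintype.card ι := by
    rw [splits_iff_card_roots.mp hsplits, charpoly_natDegree_eq_dim]
  rw [trace_eq_sum_roots_charpoly_of_splits hsplits, ← hcard]
  refine Multiset.sum_mem_card_nsmul fun μ hμ => (mem_nthRootsFinset hL (1 : F)).mpr ?_
  refine pow_eq_one_of_mem_spectrum hm (mem_spectrum_iff_isRoot_charpoly.mpr ?_)
  exact (mem_roots m.charpoly_monic.ne_zero).mp hμ

theorem exists_finset_forall_trace_mem_of_pow_eq_one {L : ℕ} (hL : 0 < L) :
    ∃ T : Finset K, #T ≤ L ^ Fintype.card ι ∧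
      ∀ m : Matrix ι ι K, m ^ L = 1 → m.trace ∈ T := by
  classical
  let φ := algebraMap K (AlgebraicClosure K)
  let T' := Fintype.card ι • nthRootsFinset L (1 : AlgebraicClosure K)
  refine ⟨T'.preimage φ φ.injective.injOn, ?_, fun m hm => ?_⟩
  · calc #(T'.preimage φ _) ≤ #T' := by rw [card_preimage]; exact card_filter_le _ _
      _ ≤ #(nthRootsFinset L (1 : AlgebraicClosure K)) ^ Fintype.card ι := card_nsmul_le
      _ ≤ L ^ Fintype.card ι := Nat.pow_le_pow_left (card_nthRootsFinset_le L 1) _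
  · rw [mem_preimage, AddMonoidHom.map_trace]
    refine trace_mem_nsmul_nthRootsFinset hL ?_
    rw [← Matrix.map_pow, hm, Matrix.map_one _ φ.map_zero φ.map_one]

theorem card_le_of_trace_mul_mem {S : Set (Matrix ι ι K)} (T : Finset K)
    (hT : ∀ s ∈ S, ∀ t ∈ S, (s * t).trace ∈ T)
    (hS : ∀ s ∈ S, ∀ s' ∈ S, (∀ t ∈ S, (s * t).trace = (s' * t).trace) → s = s') :
    Nat.card S ≤ #T ^ (Fintype.card ι ^ 2) := by
  obtain ⟨b, hbS, hspan, hli⟩ := exists_linearIndependent K S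
  have : Fintype b := hli.setFinite.fintype
  have hb : Nat.card b ≤ Fintype.card ι ^ 2 := by
    simpa [sq, Module.finrank_matrix] using hli.fintype_card_le_finrank
  let Φ : S → b → T := fun s t => ⟨(s.1 * t.1).trace, hT _ s.2 _ (hbS t.2)⟩
  have hΦ : Function.Injective Φ := by
    intro s s' hss'
    refine Subtype.ext (hS _ s.2 _ s'.2 fun t ht => ?_)
    have hb : Set.EqOn (traceLinearMap ι K K ∘ₗ LinearMap.mulLeft K s.1)
        (traceLinearMap ι K K ∘ₗ LinearMap.mulLeft K s'.1) b := fun t ht =>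
      congrArg Subtype.val (congrFun hss' ⟨t, ht⟩)
    exact LinearMap.eqOn_span hb (hspan ▸ Submodule.subset_span ht)
  rcases S.eq_empty_or_nonempty with hS0 | ⟨s, hs⟩
  · simp [hS0]
  have hT0 : 0 < #T := card_pos.mpr ⟨_, hT s hs s hs⟩
  calc Nat.card S ≤ Nat.card (b → T) := Nat.card_le_card_of_injective Φ hΦ
    _ = #T ^ Nat.card b := by rw [Nat.card_fun, Nat.card_eq_finsetCard]
    _ ≤ #T ^ (Fintype.card ι ^ 2) := Nat.pow_le_pow_right hT0 hb

namespace GeneralLinearGroup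

variable [CharZero K] {B : Subgroup (GL ι K)} {L : ℕ}

/-- With `u = h⁻¹ * g`, testing against `x = u ^ k * h⁻¹` shows that `trace (u ^ k)` does not
depend on `k`. -/
theorem eq_of_forall_trace_mul_eq (hL : 0 < L) (hB : ∀ g ∈ B, g ^ L = 1) {g h : GL ι K}
    (hg : g ∈ B) (hh : h ∈ B)
    (htr : ∀ x ∈ B, ((g : Matrix ι ι K) * x).trace = ((h : Matrix ι ι K) * x).trace) : g = h := by
  set u := h⁻¹ * g
  have hu : u ∈ B := B.mul_mem (B.inv_mem hh) hg
  have hsucc : ∀ k, ((u : Matrix ι ι K) ^ (k + 1)).trace = ((u : Matrix ι ι K) ^ k).trace := by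
    intro k
    have := htr (u ^ k * h⁻¹) (B.mul_mem (B.pow_mem hu k) (B.inv_mem hh))
    have hconj : g * (u ^ k * h⁻¹) = h * u ^ (k + 1) * h⁻¹ := by
      rw [show g = h * u from (mul_inv_cancel_left h g).symm, pow_succ']
      simp only [mul_assoc]
    rwa [← Units.val_mul, ← Units.val_mul, hconj, ← mul_assoc, Units.val_mul, Units.val_mul,
      Units.val_mul, Units.val_mul, trace_units_conj, trace_units_conj, Units.val_pow_eq_pow_val,
      Units.val_pow_eq_pow_val] at this
  have htr_pow : ∀ k, ((u : Matrix ι ι K) ^ k).trace = Fintype.card ι := fun k => by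
    induction k with
    | zero => rw [pow_zero, trace_one]
    | succ k ih => rw [hsucc, ih]
  have hu1 : (u : Matrix ι ι K) = 1 :=
    eq_one_of_pow_eq_one_of_trace_pow hL (by rw [← Units.val_pow_eq_pow_val, hB u hu,
      Units.val_one]) htr_pow
  exact (inv_mul_eq_one.mp (Units.ext hu1)).symm

theorem card_subgroup_le_of_forall_pow_eq_one (hL : 0 < L) (hB : ∀ g ∈ B, g ^ L = 1) :
    Nat.card B ≤ (L ^ Fintype.card ι) ^ (Fintype.card ι ^ 2) := by
  obtain ⟨T, hTcard, hT⟩ := exists_finset_forall_trace_mem_of_pow_eq_one (ι := ι) (K := K) hL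
  have hcard : Nat.card B = Nat.card (Units.val '' (B : Set (GL ι K))) :=
    (Nat.card_image_of_injective Units.val_injective _).symm
  rw [hcard]
  refine (card_le_of_trace_mul_mem T ?_ ?_).trans (Nat.pow_le_pow_left hTcard _)
  · rintro _ ⟨g, hg, rfl⟩ _ ⟨h, hh, rfl⟩
    exact hT _ (by rw [← Units.val_mul, ← Units.val_pow_eq_pow_val, hB _ (B.mul_mem hg hh),
      Units.val_one])
  · rintro _ ⟨g, hg, rfl⟩ _ ⟨h, hh, rfl⟩ hgh
    exact congrArg _ (eq_of_forall_trace_mul_eq hL hB hg hh fun x hx => hgh _ ⟨x, hx, rfl⟩)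

end GeneralLinearGroup

end Matrix

theorem stmt1_general (n N : ℕ) :
    ∃ M : ℕ, 0 < M ∧
      ∀ (K : Type*) [Field K] [CharZero K] (H : Subgroup (GL (Fin n) K)),
        (∀ h ∈ H, IsOfFinOrder h → orderOf h ≤ N) →
        ∀ B : Subgroup (GL (Fin n) K), B ≤ H → Finite B → Nat.card B ≤ M := by
  refine ⟨(N.factorial ^ n) ^ (n ^ 2), by positivity, fun K _ _ H hH B hBH _ => ?_⟩
  have hexp : ∀ g ∈ B, g ^ N.factorial = 1 := fun g hg => by
    have hfin : IsOfFinOrder g := B.subtype.isOfFinOrder (isOfFinOrder_of_finite (⟨g, hg⟩ : B))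
    exact orderOf_dvd_iff_pow_eq_one.mp (Nat.dvd_factorial hfin.orderOf_pos (hH g (hBH hg) hfin))
  simpa using Matrix.GeneralLinearGroup.card_subgroup_le_of_forall_pow_eq_one N.factorial_pos hexp

/-- For all positive integers `n` and `N` there exists a positive integer
`𝐍 = 𝐍(n,N)`, depending only on `n` and `N`, with the following property: for every field
`K` of characteristic zero and every subgroup `H` of `GL(n,K)` such that every element of
finite order in `H` has order at most `N`, every finite subgroup of `H` has order at most
`𝐍`.  In particular, `H` is bounded. -/
theorem stmt1 (n N : ℕ) (hn : 0 < n) (hN : 0 < N) :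
    ∃ M : ℕ, 0 < M ∧
      ∀ (K : Type*) [Field K] [CharZero K] (H : Subgroup (GL (Fin n) K)),
        (∀ h ∈ H, IsOfFinOrder h → orderOf h ≤ N) →
        ∀ B : Subgroup (GL (Fin n) K), B ≤ H → Finite B → Nat.card B ≤ M :=
  stmt1_general n N
end

section
/- Let K be a field of characteristic zero containing all roots of unity, V a K-vector space of finite positive dimension d, and φ : V × V → K a nondegenerate symmetric K-bilinear form that is anisotropic. If u ∈ O(V,φ) is an element of finite order, then u² = 1_V. -/
/-!
An isometry of an anisotropic form can only have eigenvalues `r` with `r ^ 2 = 1`: from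
`u v = r • v` we get `φ v v = r ^ 2 * φ v v` with `φ v v ≠ 0`. If `u` has finite order `n` and `K`
contains a primitive `n`-th root of unity, the minimal polynomial of `u` divides `X ^ n - 1`, which
splits with simple roots; so `u` is diagonalizable and is therefore annihilated by `X ^ 2 - 1`.
-/

open Polynomial

theorem LinearMap.BilinForm.sq_eq_one_of_isometry_of_apply_eq_smul {R M : Type*} [CommRing R]
    [NoZeroDivisors R] [AddCommGroup M] [Module R M] {φ : LinearMap.BilinForm R M}
    (haniso : ∀ v : M, v ≠ 0 → φ v v ≠ 0) {u : M →ₗ[R] M} (hu : ∀ x y : M, φ (u x) (u y) = φ x y)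
    {v : M} {r : R} (hv : v ≠ 0) (huv : u v = r • v) : r ^ 2 = 1 := by
  have h : r ^ 2 * φ v v = 1 * φ v v := by
    simpa [huv, sq, mul_assoc] using hu v v
  exact mul_right_cancel₀ (haniso v hv) h

theorem Polynomial.Separable.dvd_of_splits_of_forall_isRoot {K : Type*} [Field K] {p q : K[X]}
    (hsep : p.Separable) (hsplit : p.Splits) (h : ∀ r, p.IsRoot r → q.IsRoot r) : p ∣ q := by
  rcases eq_or_ne q 0 with rfl | hq
  · exact dvd_zero p
  refine hsplit.dvd_of_roots_le_roots hsep.ne_zero ?_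
  rw [Multiset.le_iff_subset (nodup_roots hsep)]
  intro r hr
  exact (mem_roots hq).mpr (h r (isRoot_of_mem_roots hr))

theorem IsPrimitiveRoot.separable_X_pow_sub_one {K : Type*} [Field K] {ζ : K} {n : ℕ}
    (hζ : IsPrimitiveRoot ζ n) (hn : n ≠ 0) : (X ^ n - 1 : K[X]).Separable :=
  have : NeZero n := ⟨hn⟩
  X_pow_sub_one_separable_iff.mpr hζ.neZero'.out

theorem Module.End.aeval_eq_zero_of_pow_eq_one {K V : Type*} [Field K] [AddCommGroup V]
    [Module K V] [FiniteDimensional K V] {f : Module.End K V} {n : ℕ} {ζ : K}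
    (hζ : IsPrimitiveRoot ζ n) (hn : n ≠ 0) (hf : f ^ n = 1) {p : K[X]}
    (h : ∀ μ, f.HasEigenvalue μ → p.IsRoot μ) : aeval f p = 0 := by
  have hdvd : minpoly K f ∣ X ^ n - 1 := minpoly.dvd K f (by simp [hf])
  have hsplit : (minpoly K f).Splits := by
    simpa using (X_pow_sub_one_splits hζ).of_dvd (X_pow_sub_C_ne_zero (Nat.pos_of_ne_zero hn) 1)
      (by simpa using hdvd)
  have hsep : (minpoly K f).Separable := (hζ.separable_X_pow_sub_one hn).of_dvd hdvd
  exact minpoly.dvd_iff.mp <| hsep.dvd_of_splits_of_forall_isRoot hsplit fun μ hμ =>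
    h μ (hasEigenvalue_of_isRoot hμ)

theorem stmt3_general {K V : Type*} [Field K] [AddCommGroup V] [Module K V]
    [FiniteDimensional K V]
    (hroots : ∀ n : ℕ, 0 < n → ∃ ζ : K, IsPrimitiveRoot ζ n)
    (φ : LinearMap.BilinForm K V)
    (haniso : ∀ v : V, v ≠ 0 → φ v v ≠ 0)
    (u : V ≃ₗ[K] V) (hu : ∀ x y : V, φ (u x) (u y) = φ x y)
    (hfin : IsOfFinOrder u) :
    u ^ 2 = 1 := by
  let f := LinearEquiv.automorphismGroup.toLinearMapMonoidHom (R := K) (M := V)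
  obtain ⟨ζ, hζ⟩ := hroots _ hfin.orderOf_pos
  have hfu : f u ^ orderOf u = 1 := by rw [← map_pow, pow_orderOf_eq_one, map_one]
  have hsq : aeval (f u) (X ^ 2 - 1 : K[X]) = 0 :=
    Module.End.aeval_eq_zero_of_pow_eq_one hζ hfin.orderOf_pos.ne' hfu fun μ hμ => by
      obtain ⟨v, hv⟩ := hμ.exists_hasEigenvector
      simpa [sub_eq_zero] using
        φ.sq_eq_one_of_isometry_of_apply_eq_smul haniso hu hv.right hv.apply_eq_smul
  apply LinearEquiv.toLinearMap_injective
  change f (u ^ 2) = f 1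
  rw [map_pow, map_one]
  simpa [sub_eq_zero] using hsq

/-- Let `K` be a field of characteristic zero containing all roots of
unity, `V` a `K`-vector space of finite positive dimension `d`, and `φ : V × V → K` a
nondegenerate symmetric `K`-bilinear form that is anisotropic. If `u ∈ O(V,φ)` is an
element of finite order, then `u² = 1_V`. -/
theorem stmt3 {K V : Type*} [Field K] [CharZero K] [AddCommGroup V] [Module K V]
    [FiniteDimensional K V] (hdim : 0 < Module.finrank K V)
    (hroots : ∀ n : ℕ, 0 < n → ∃ ζ : K, IsPrimitiveRoot ζ n)
    (φ : LinearMap.BilinForm K V)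
    (hsymm : ∀ x y : V, φ x y = φ y x)
    (hnondeg : ∀ x : V, (∀ y : V, φ x y = 0) → x = 0)
    (haniso : ∀ v : V, v ≠ 0 → φ v v ≠ 0)
    (u : V ≃ₗ[K] V) (hu : ∀ x y : V, φ (u x) (u y) = φ x y)
    (hfin : IsOfFinOrder u) :
    u ^ 2 = 1 :=
  stmt3_general hroots φ haniso u hu hfin
end

section
/- Let K be a field of characteristic zero containing all roots of unity, V a K-vector space of finite positive dimension d, and φ : V × V → K a nondegenerate symmetric K-bilinear form that is anisotropic. Let G be a nontrivial finite subgroup of O(V,φ). Then G is a commutative group of exponent 2 whose order divides 2^d. If, in addition, G lies in SO(V,φ), then the order of G divides 2^{d-1}. -/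
variable {K V : Type*} [Field K] [AddCommGroup V] [Module K V]

/-- The orthogonal group `O(V,φ)` of a bilinear form `φ`, viewed as the subgroup of the
group of `K`-linear automorphisms of `V` consisting of those `u` with
`φ(ux,uy) = φ(x,y)` for all `x,y ∈ V`. -/
def orthogonalSubgroup (φ : LinearMap.BilinForm K V) : Subgroup (V ≃ₗ[K] V) where
  carrier := {u | ∀ x y : V, φ (u x) (u y) = φ x y}
  one_mem' := fun _ _ => rfl
  mul_mem' := by
    intro u v hu hv x y
    have h : φ ((u * v) x) ((u * v) y) = φ (u (v x)) (u (v y)) := rfl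
    rw [h, hu, hv]
  inv_mem' := by
    intro u hu x y
    have h := hu ((u⁻¹ : V ≃ₗ[K] V) x) ((u⁻¹ : V ≃ₗ[K] V) y)
    rw [show u ((u⁻¹ : V ≃ₗ[K] V) x) = x from u.apply_symm_apply x,
      show u ((u⁻¹ : V ≃ₗ[K] V) y) = y from u.apply_symm_apply y] at h
    exact h.symm

/-!
An isometry `g` of finite order `n` is annihilated by `X ^ n - 1`, which splits with simple roots
because `K` contains the `n`-th roots of unity, so the minimal polynomial of `g` is a product of
distinct `X - μ` with `μ` an eigenvalue. For an eigenvector `v`,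
`φ v v = φ (g v) (g v) = μ ^ 2 φ v v`, and anisotropy gives `μ = ±1`. Hence `g ^ 2 = 1`, so `G`
has exponent `2` and is commutative. Commuting involutions are simultaneously diagonalisable with
eigenvalues `±1`, so in a common eigenbasis `G` embeds into the sign group `{±1} ^ d` of order
`2 ^ d`. The determinant of `g` is the product of its signs, so for `G ≤ SO(V, φ)` the embedding
lands in the kernel of the product map, a subgroup of index `2`.
-/

open Polynomial Module

theorem Module.End.sq_eq_one_of_hasEigenvalue_of_isometry {φ : LinearMap.BilinForm K V}
    (hφ : ∀ v, v ≠ 0 → φ v v ≠ 0) {f : Module.End K V} (hf : ∀ v, φ (f v) (f v) = φ v v)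
    {μ : K} (hμ : f.HasEigenvalue μ) : μ ^ 2 = 1 := by
  obtain ⟨v, hv⟩ := hμ.exists_hasEigenvector
  have h := hf v
  simp only [hv.apply_eq_smul, map_smul, LinearMap.smul_apply, smul_eq_mul] at h
  exact mul_right_cancel₀ (hφ v hv.2) (by linear_combination h)

theorem Module.End.aeval_eq_zero_of_forall_hasEigenvalue_isRoot [FiniteDimensional K V]
    {f : Module.End K V} {p q : K[X]} (hp : p.Separable) (hps : p.Splits) (hpf : aeval f p = 0)
    (hq : q ≠ 0) (h : ∀ μ, f.HasEigenvalue μ → q.IsRoot μ) : aeval f q = 0 := by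
  have hdvd : minpoly K f ∣ p := minpoly.dvd K f hpf
  have hroots : (minpoly K f).roots ≤ q.roots := by
    rw [Multiset.le_iff_subset (nodup_roots (hp.of_dvd hdvd))]
    intro μ hμ
    exact (mem_roots hq).mpr (h μ (hasEigenvalue_of_isRoot (isRoot_of_mem_roots hμ)))
  obtain ⟨r, rfl⟩ := (hps.of_dvd hp.ne_zero hdvd).dvd_of_roots_le_roots
    (minpoly.ne_zero (Algebra.IsIntegral.isIntegral f)) hroots
  rw [map_mul, minpoly.aeval, zero_mul]

theorem Module.End.sq_eq_one_of_pow_eq_one_of_isometry [FiniteDimensional K V]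
    {φ : LinearMap.BilinForm K V} (hφ : ∀ v, v ≠ 0 → φ v v ≠ 0) {f : Module.End K V}
    (hf : ∀ v, φ (f v) (f v) = φ v v) {n : ℕ} [NeZero n] {ζ : K} (hζ : IsPrimitiveRoot ζ n)
    (hfn : f ^ n = 1) : f ^ 2 = 1 := by
  have := hζ.neZero'
  have h := aeval_eq_zero_of_forall_hasEigenvalue_isRoot (f := f) (p := (X ^ n - 1 : K[X]))
    (q := (X ^ 2 - 1 : K[X]))
    (X_pow_sub_one_separable_iff.mpr (NeZero.ne _)) (X_pow_sub_one_splits hζ)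
    (by simp [hfn]) (X_pow_sub_C_ne_zero two_pos 1)
    (fun μ hμ => by simp [sq_eq_one_of_hasEigenvalue_of_isometry hφ hf hμ])
  simpa [sub_eq_zero] using h

theorem LinearEquiv.sq_eq_one_of_isOfFinOrder_of_isometry [FiniteDimensional K V]
    (hroots : ∀ n : ℕ, 0 < n → ∃ ζ : K, IsPrimitiveRoot ζ n) {φ : LinearMap.BilinForm K V}
    (hφ : ∀ v, v ≠ 0 → φ v v ≠ 0) {g : V ≃ₗ[K] V} (hg : IsOfFinOrder g)
    (hgφ : ∀ v, φ (g v) (g v) = φ v v) : g ^ 2 = 1 := by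
  let ρ := LinearEquiv.automorphismGroup.toLinearMapMonoidHom (R := K) (M := V)
  obtain ⟨ζ, hζ⟩ := hroots _ hg.orderOf_pos
  have : NeZero (orderOf g) := ⟨hg.orderOf_pos.ne'⟩
  refine LinearEquiv.toLinearMap_injective (?_ : ρ (g ^ 2) = ρ 1)
  rw [map_pow, map_one]
  refine Module.End.sq_eq_one_of_pow_eq_one_of_isometry hφ hgφ hζ ?_
  rw [← map_pow, pow_orderOf_eq_one, map_one]

section CommutingInvolutions

variable [NeZero (2 : K)]

theorem one_ne_neg_one : (1 : K) ≠ -1 := fun h =>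
  (two_ne_zero : (2 : K) ≠ 0) (by linear_combination h)

theorem Module.End.inf_eigenspace_one_sup_inf_eigenspace_neg_one {f : Module.End K V}
    (hf : f ^ 2 = 1) {W : Submodule K V} (hW : ∀ w ∈ W, f w ∈ W) :
    W ⊓ f.eigenspace 1 ⊔ W ⊓ f.eigenspace (-1) = W := by
  refine le_antisymm (sup_le inf_le_left inf_le_left) fun v hv => ?_
  have hff (v : V) : f (f v) = v := by rw [← Module.End.mul_apply, ← sq, hf, Module.End.one_apply]
  have hv_split : v = (2⁻¹ : K) • (v + f v) + (2⁻¹ : K) • (v - f v) := by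
    rw [← smul_add, add_add_sub_cancel, ← two_smul K v, smul_smul, inv_mul_cancel₀ two_ne_zero,
      one_smul]
  rw [hv_split]
  refine Submodule.add_mem_sup ⟨W.smul_mem _ (W.add_mem hv (hW v hv)), ?_⟩
    ⟨W.smul_mem _ (W.sub_mem hv (hW v hv)), ?_⟩
  · simp [hff, add_comm]
  · simp [hff, ← smul_neg]

theorem Module.End.exists_linearIndepOn_common_eigenvectors [FiniteDimensional K V] {ι : Type*}
    (f : ι → Module.End K V) (hsq : ∀ i, f i ^ 2 = 1) (hcomm : ∀ i j, Commute (f i) (f j))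
    (W : Submodule K V) (hW : ∀ i, ∀ w ∈ W, f i w ∈ W) :
    ∃ s : Set V, LinearIndepOn K id s ∧ Submodule.span K s = W ∧
      ∀ i, ∀ v ∈ s, f i v = v ∨ f i v = -v := by
  induction hn : finrank K W using Nat.strong_induction_on generalizing W with
  | _ n ih =>
  by_cases hpm : ∀ i, ∀ w ∈ W, f i w = w ∨ f i w = -w
  · obtain ⟨s, hsW, hspan, hli⟩ := exists_linearIndependent K (W : Set V)
    exact ⟨s, hli, by rw [hspan, Submodule.span_eq], fun i v hv => hpm i v (hsW hv)⟩
  -- Split `W` along the `±1`-eigenspaces of an `f i` that is not `±1` on `W`; both pieces are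
  -- smaller and, by commutativity, invariant under every `f j`.
  push Not at hpm
  obtain ⟨i, w, hw, hw_one, hw_neg⟩ := hpm
  have hinv (μ : K) (j : ι) : ∀ v ∈ W ⊓ (f i).eigenspace μ, f j v ∈ W ⊓ (f i).eigenspace μ :=
    fun v hv => ⟨hW j v hv.1, mapsTo_genEigenspace_of_comm (hcomm i j) μ 1 hv.2⟩
  have hlt (μ : K) (hμ : f i w ≠ μ • w) : finrank K ↥(W ⊓ (f i).eigenspace μ) < n := by
    refine hn ▸ Submodule.finrank_lt_finrank_of_lt (inf_le_left.lt_of_ne fun h => hμ ?_)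
    have hw' : w ∈ W ⊓ (f i).eigenspace μ := by rwa [h]
    exact Module.End.mem_eigenspace_iff.mp hw'.2
  obtain ⟨s, hs, hs_span, hs_eig⟩ := ih _ (hlt 1 (by simpa using hw_one)) _ (hinv 1) rfl
  obtain ⟨t, ht, ht_span, ht_eig⟩ := ih _ (hlt (-1) (by simpa using hw_neg)) _ (hinv (-1)) rfl
  refine ⟨s ∪ t, hs.id_union ht ?_, ?_, ?_⟩
  · rw [hs_span, ht_span]
    exact ((f i).disjoint_genEigenspace one_ne_neg_one 1 1).mono inf_le_right inf_le_right
  · rw [Submodule.span_union, hs_span, ht_span,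
      inf_eigenspace_one_sup_inf_eigenspace_neg_one (hsq i) (hW i)]
  · rintro j v (hv | hv)
    exacts [hs_eig j v hv, ht_eig j v hv]

theorem Subgroup.exists_basis_forall_apply_eq_or_eq_neg [FiniteDimensional K V]
    (G : Subgroup (V ≃ₗ[K] V)) (hG : ∀ g ∈ G, g ^ 2 = 1) :
    ∃ (s : Set V) (b : Basis s K V), ∀ g ∈ G, ∀ i, g (b i) = b i ∨ g (b i) = -b i := by
  let ρ := LinearEquiv.automorphismGroup.toLinearMapMonoidHom.comp G.subtype
  have hsq (g : G) : g ^ 2 = 1 := Subtype.ext (hG g g.2)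
  obtain ⟨s, hs, hs_span, hs_eig⟩ := Module.End.exists_linearIndepOn_common_eigenvectors
    (fun g : G => ρ g) (fun g => by rw [← map_pow, hsq, map_one])
    (fun g h => (Commute.of_orderOf_dvd_two (fun g => orderOf_dvd_of_pow_eq_one (hsq g)) g h).map ρ)
    ⊤ fun _ _ _ => trivial
  let b := Basis.mk hs.linearIndependent (by simp [hs_span])
  exact ⟨s, b, fun g hg i => by simpa [b, ρ] using hs_eig ⟨g, hg⟩ i i.2⟩

end CommutingInvolutions

theorem Units.intCast_injective [NeZero (2 : K)] :
    Function.Injective fun u : ℤˣ => ((u : ℤ) : K) := by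
  intro u v huv
  rcases Int.units_eq_one_or u with rfl | rfl <;> rcases Int.units_eq_one_or v with rfl | rfl <;>
    simp_all [eq_comm, one_ne_neg_one]

theorem Nat.card_units_int : Nat.card ℤˣ = 2 := by
  rw [Nat.card_eq_fintype_card, Fintype.card_units_int]

namespace Module.Basis

variable {ι : Type*}

section

variable (b : Basis ι K V)

open Classical in
noncomputable def eigenSign (g : V ≃ₗ[K] V) (i : ι) : ℤˣ :=
  if g (b i) = b i then 1 else -1

theorem apply_eq_eigenSign_smul {g : V ≃ₗ[K] V} {i : ι} (h : g (b i) = b i ∨ g (b i) = -b i) :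
    g (b i) = ((b.eigenSign g i : ℤ) : K) • b i := by
  unfold eigenSign
  split_ifs with h1
  · simpa using h1
  · simpa [h1] using h

variable [NeZero (2 : K)]

noncomputable def signHom (G : Subgroup (V ≃ₗ[K] V))
    (hG : ∀ g ∈ G, ∀ i, g (b i) = b i ∨ g (b i) = -b i) : G →* (ι → ℤˣ) :=
  MonoidHom.mk' (fun g => b.eigenSign g) fun g h => funext fun i => by
    refine Units.intCast_injective (smul_left_injective K (b.ne_zero i) ?_)
    calc ((b.eigenSign (g * h : G) i : ℤ) : K) • b i = g.1 (h.1 (b i)) :=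
          (b.apply_eq_eigenSign_smul (hG _ (g * h).2 i)).symm
      _ = _ := by
          rw [b.apply_eq_eigenSign_smul (hG h h.2 i), map_smul,
            b.apply_eq_eigenSign_smul (hG g g.2 i), smul_smul, mul_comm]
          simp

variable {G : Subgroup (V ≃ₗ[K] V)} (hG : ∀ g ∈ G, ∀ i, g (b i) = b i ∨ g (b i) = -b i)

@[simp]
theorem signHom_apply (g : G) : b.signHom G hG g = b.eigenSign g := rfl

theorem signHom_injective : Function.Injective (b.signHom G hG) := fun g h hgh =>
  Subtype.ext <| b.ext' fun i => by
    rw [b.apply_eq_eigenSign_smul (hG g g.2 i), b.apply_eq_eigenSign_smul (hG h h.2 i)]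
    exact congrArg (fun ε : ι → ℤˣ => ((ε i : ℤ) : K) • b i) hgh

theorem det_eq_prod_signHom [Fintype ι] (g : G) :
    (LinearEquiv.det (g : V ≃ₗ[K] V) : K) = ∏ i, ((b.signHom G hG g i : ℤ) : K) := by
  classical
  have h_diag : LinearMap.toMatrix b b g =
      Matrix.diagonal fun i => ((b.signHom G hG g i : ℤ) : K) := by
    ext i j
    rw [LinearMap.toMatrix_apply, LinearEquiv.coe_coe, b.apply_eq_eigenSign_smul (hG g g.2 j)]
    by_cases hij : i = j
    · subst hij; simp
    · simp [hij]
  rw [LinearEquiv.coe_det, ← LinearMap.det_toMatrix b, h_diag, Matrix.det_diagonal]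

end

variable [NeZero (2 : K)] {G : Subgroup (V ≃ₗ[K] V)}

theorem card_dvd_two_pow_of_forall_apply_eq_or_eq_neg [Finite ι] (b : Basis ι K V)
    (hG : ∀ g ∈ G, ∀ i, g (b i) = b i ∨ g (b i) = -b i) : Nat.card G ∣ 2 ^ Nat.card ι := by
  simpa [Nat.card_fun, Nat.card_units_int] using
    Subgroup.card_dvd_of_injective _ (b.signHom_injective hG)

theorem card_dvd_two_pow_pred_of_forall_apply_eq_or_eq_neg [Finite ι] (b : Basis ι K V)
    (hG : ∀ g ∈ G, ∀ i, g (b i) = b i ∨ g (b i) = -b i)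
    (hdet : ∀ g ∈ G, LinearEquiv.det g = 1) : Nat.card G ∣ 2 ^ (Nat.card ι - 1) := by
  classical
  cases isEmpty_or_nonempty ι with
  | inl _ => simpa using b.card_dvd_two_pow_of_forall_apply_eq_or_eq_neg hG
  | inr _ =>
  have := Fintype.ofFinite ι
  let π : (ι → ℤˣ) →* ℤˣ := ∏ i, Pi.evalMonoidHom (fun _ => ℤˣ) i
  have hπ (x : ι → ℤˣ) : π x = ∏ i, x i := by simp [π]
  have h_mem (g : G) : b.signHom G hG g ∈ π.ker := by
    rw [MonoidHom.mem_ker, hπ]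
    apply Units.intCast_injective (K := K)
    push_cast
    rw [← det_eq_prod_signHom, hdet g g.2, Units.val_one]
  have h_surj : Function.Surjective π := fun u =>
    ⟨Pi.mulSingle (Classical.arbitrary ι) u, by simp [hπ]⟩
  have h_card : Nat.card π.ker * Nat.card ℤˣ = Nat.card (ι → ℤˣ) := by
    rw [← π.ker.card_mul_index, Subgroup.index_ker, MonoidHom.range_eq_top.mpr h_surj,
      Subgroup.card_top]
  rw [Nat.card_fun, Nat.card_units_int, ← Nat.sub_add_cancel (Nat.card_pos (α := ι)),
    pow_succ] at h_card
  refine (Subgroup.card_dvd_of_injective ((b.signHom G hG).codRestrict _ h_mem) fun g h hgh =>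
    b.signHom_injective hG (congrArg Subtype.val hgh)).trans ?_
  rw [Nat.eq_of_mul_eq_mul_right two_pos h_card]

end Module.Basis

theorem stmt5_general {K V : Type*} [Field K] [CharZero K] [AddCommGroup V] [Module K V]
    [FiniteDimensional K V]
    (hroots : ∀ n : ℕ, 0 < n → ∃ ζ : K, IsPrimitiveRoot ζ n)
    (φ : LinearMap.BilinForm K V)
    (haniso : ∀ v : V, v ≠ 0 → φ v v ≠ 0)
    (G : Subgroup (V ≃ₗ[K] V)) (hG : G ≤ orthogonalSubgroup φ)
    (hGfin : Finite G) (hGnontriv : G ≠ ⊥) :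
    (∀ a ∈ G, ∀ b ∈ G, a * b = b * a) ∧ Monoid.exponent G = 2 ∧
      Nat.card G ∣ 2 ^ (Module.finrank K V) ∧
      ((∀ u ∈ G, LinearEquiv.det u = 1) → Nat.card G ∣ 2 ^ (Module.finrank K V - 1)) := by
  have hsq : ∀ g ∈ G, g ^ 2 = 1 := fun g hg =>
    LinearEquiv.sq_eq_one_of_isOfFinOrder_of_isometry hroots haniso
      (Submonoid.isOfFinOrder_coe.mpr (isOfFinOrder_of_finite (⟨g, hg⟩ : G))) fun v => hG hg v v
  have : Nontrivial G := (G.nontrivial_iff_ne_bot).mpr hGnontriv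
  have hexp : Monoid.exponent G = 2 := (Monoid.exponent_eq_prime_iff Nat.prime_two).mpr
    fun g hg => orderOf_eq_prime (Subtype.ext (hsq g g.2)) hg
  obtain ⟨s, b, hb⟩ := G.exists_basis_forall_apply_eq_or_eq_neg hsq
  have := Module.Finite.finite_basis b
  rw [finrank_eq_nat_card_basis b]
  exact ⟨fun g hg h hh => congrArg Subtype.val (mul_comm_of_exponent_two hexp ⟨g, hg⟩ ⟨h, hh⟩),
    hexp, b.card_dvd_two_pow_of_forall_apply_eq_or_eq_neg hb,
    b.card_dvd_two_pow_pred_of_forall_apply_eq_or_eq_neg hb⟩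

/-- Let `K` be a field of characteristic zero containing all roots of
unity, `V` a `K`-vector space of finite positive dimension `d`, and `φ` a nondegenerate
symmetric anisotropic `K`-bilinear form on `V`. Let `G` be a nontrivial finite subgroup of
`O(V,φ)`. Then `G` is a commutative group of exponent `2` whose order divides `2 ^ d`.
If, in addition, `G` lies in `SO(V,φ)`, then the order of `G` divides `2 ^ (d - 1)`. -/
theorem stmt5 {K V : Type*} [Field K] [CharZero K] [AddCommGroup V] [Module K V]
    [FiniteDimensional K V] (hdim : 0 < Module.finrank K V)
    (hroots : ∀ n : ℕ, 0 < n → ∃ ζ : K, IsPrimitiveRoot ζ n)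
    (φ : LinearMap.BilinForm K V)
    (hsymm : ∀ x y : V, φ x y = φ y x)
    (hnondeg : ∀ x : V, (∀ y : V, φ x y = 0) → x = 0)
    (haniso : ∀ v : V, v ≠ 0 → φ v v ≠ 0)
    (G : Subgroup (V ≃ₗ[K] V)) (hG : G ≤ orthogonalSubgroup φ)
    (hGfin : Finite G) (hGnontriv : G ≠ ⊥) :
    (∀ a ∈ G, ∀ b ∈ G, a * b = b * a) ∧ Monoid.exponent G = 2 ∧
      Nat.card G ∣ 2 ^ (Module.finrank K V) ∧
      ((∀ u ∈ G, LinearEquiv.det u = 1) → Nat.card G ∣ 2 ^ (Module.finrank K V - 1)) :=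
  stmt5_general hroots φ haniso G hG hGfin hGnontriv
end

section
/- Let K be a field of characteristic zero containing all roots of unity, V a K-vector space of finite positive dimension d, and φ : V × V → K a nondegenerate symmetric K-bilinear form that is anisotropic. Let u ∈ GO(V,φ) be a similitude such that there exist a positive integer n and c ∈ K* with uⁿ = c·1_V (i.e., the image of u in PO(V,φ) = GO(V,φ)/(K*·1_V) has finite order). Then there exists c' ∈ K* with u⁴ = c'·1_V, i.e., the image of u in PO(V,φ) has order dividing 4. -/
/-!
Normalising `u²` by the multiplier gives an isometry `f = μ⁻¹ • u²` of `φ`, and `uⁿ = c • 1` forces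
`μⁿ = c²` (evaluate `φ` on a nonzero vector), hence `fⁿ = 1`. Since `K` contains the `n`-th roots of
unity and has characteristic zero, `Xⁿ - 1` is separable and split, so `f` is diagonalisable. An
eigenvalue `r` of an isometry with eigenvector `v` satisfies `r² φ(v, v) = φ(v, v)`, so anisotropy
gives `r = ±1`, hence `f² = 1` and `u⁴ = μ² • 1`.
-/

namespace Module.End

open Polynomial

variable {K V : Type*} [Field K] [AddCommGroup V] [Module K V] [FiniteDimensional K V]

theorem aeval_eq_zero_of_forall_hasEigenvalue {f : End K V} {p q : K[X]} (hsep : p.Separable)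
    (hsplit : p.Splits) (hp : aeval f p = 0) (hq : q ≠ 0)
    (h : ∀ r, f.HasEigenvalue r → q.IsRoot r) : aeval f q = 0 := by
  have hdvd : minpoly K f ∣ p := minpoly.dvd K f hp
  have hroots : (minpoly K f).roots ≤ q.roots := by
    rw [Multiset.le_iff_subset (nodup_roots (hsep.of_dvd hdvd))]
    exact fun r hr ↦ (mem_roots hq).2 (h r (hasEigenvalue_of_isRoot (isRoot_of_mem_roots hr)))
  obtain ⟨g, rfl⟩ := (hsplit.of_dvd hsep.ne_zero hdvd).dvd_of_roots_le_roots
    (minpoly.ne_zero (Algebra.IsIntegral.isIntegral f)) hroots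
  rw [map_mul, minpoly.aeval, zero_mul]

theorem pow_eq_one_of_forall_hasEigenvalue {f : End K V} {n m : ℕ} {ζ : K}
    (hζ : IsPrimitiveRoot ζ n) (hn : (n : K) ≠ 0) (hf : f ^ n = 1) (hm : m ≠ 0)
    (h : ∀ r, f.HasEigenvalue r → r ^ m = 1) : f ^ m = 1 := by
  have hsplit : (X ^ n - 1 : K[X]).Splits := by simpa using X_pow_sub_one_splits hζ
  have hq : (X ^ m - 1 : K[X]) ≠ 0 := (monic_X_pow_sub_C (1 : K) hm).ne_zero
  have := aeval_eq_zero_of_forall_hasEigenvalue (f := f) (X_pow_sub_one_separable_iff.2 hn) hsplit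
    (by simp [hf]) hq (fun r hr ↦ by simp [h r hr])
  simpa [sub_eq_zero] using this

end Module.End

namespace LinearMap.BilinForm

variable {K V : Type*} [Field K] [AddCommGroup V] [Module K V]

def IsSimilitude (φ : LinearMap.BilinForm K V) (μ : K) (f : Module.End K V) : Prop :=
  ∀ x y, φ (f x) (f y) = μ * φ x y

variable {φ : LinearMap.BilinForm K V} {f g : Module.End K V} {μ ν : K}

theorem isSimilitude_one : IsSimilitude φ 1 (1 : Module.End K V) := fun x y ↦ by simp

theorem IsSimilitude.mul (hf : IsSimilitude φ μ f) (hg : IsSimilitude φ ν g) :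
    IsSimilitude φ (μ * ν) (f * g) := fun x y ↦ by
  rw [Module.End.mul_apply, Module.End.mul_apply, hf, hg, mul_assoc]

theorem IsSimilitude.pow (hf : IsSimilitude φ μ f) : ∀ k : ℕ, IsSimilitude φ (μ ^ k) (f ^ k)
  | 0 => by simpa using isSimilitude_one
  | k + 1 => by simpa [pow_succ] using (hf.pow k).mul hf

theorem IsSimilitude.smul (hf : IsSimilitude φ μ f) (a : K) :
    IsSimilitude φ (a ^ 2 * μ) (a • f) := fun x y ↦ by
  simp only [LinearMap.smul_apply, map_smul, smul_eq_mul, hf x y]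
  ring

theorem IsSimilitude.sq_eq_of_hasEigenvalue (haniso : ∀ v, v ≠ 0 → φ v v ≠ 0)
    (hf : IsSimilitude φ μ f) {r : K} (hr : f.HasEigenvalue r) : r ^ 2 = μ := by
  obtain ⟨v, hv⟩ := hr.exists_hasEigenvector
  have h := hf v v
  simp only [hv.apply_eq_smul, map_smul, LinearMap.smul_apply, smul_eq_mul, ← mul_assoc] at h
  exact mul_right_cancel₀ (haniso v hv.2) (by rw [sq, h])

theorem IsSimilitude.eq_sq_of_eq_smul_one [Nontrivial V] (haniso : ∀ v, v ≠ 0 → φ v v ≠ 0)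
    (hf : IsSimilitude φ μ f) {c : K} (hc : f = c • 1) : μ = c ^ 2 := by
  obtain ⟨v, hv⟩ := exists_ne (0 : V)
  have heig : f.HasEigenvalue c :=
    Module.End.hasEigenvalue_of_hasEigenvector ⟨Module.End.mem_eigenspace_iff.2 (by simp [hc]), hv⟩
  exact (hf.sq_eq_of_hasEigenvalue haniso heig).symm

end LinearMap.BilinForm

theorem stmt6_general {K V : Type*} [Field K] [CharZero K] [AddCommGroup V] [Module K V]
    [FiniteDimensional K V] (hdim : 0 < Module.finrank K V)
    (hroots : ∀ n : ℕ, 0 < n → ∃ ζ : K, IsPrimitiveRoot ζ n)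
    (φ : LinearMap.BilinForm K V)
    (haniso : ∀ v : V, v ≠ 0 → φ v v ≠ 0)
    (u : V ≃ₗ[K] V)
    (hGO : ∃ μ : K, μ ≠ 0 ∧ ∀ x y : V, φ (u x) (u y) = μ * φ x y)
    (hfin : ∃ n : ℕ, 0 < n ∧ ∃ c : K, c ≠ 0 ∧ ∀ x : V, (u ^ n) x = c • x) :
    ∃ c' : K, c' ≠ 0 ∧ ∀ x : V, (u ^ 4) x = c' • x := by
  obtain ⟨μ, hμ, hU⟩ := hGO
  obtain ⟨n, hn, c, -, hun⟩ := hfin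
  obtain ⟨ζ, hζ⟩ := hroots n hn
  have : Nontrivial V := Module.nontrivial_of_finrank_pos hdim
  set U : Module.End K V := u.toLinearMap
  replace hU : φ.IsSimilitude μ U := hU
  have hpow (k : ℕ) (x : V) : (u ^ k) x = (U ^ k) x := by
    rw [LinearEquiv.pow_apply, Module.End.pow_apply]; rfl
  have hUn : U ^ n = c • 1 := LinearMap.ext fun x ↦ by simpa [hpow] using hun x
  have hμn : μ ^ n = c ^ 2 := (hU.pow n).eq_sq_of_eq_smul_one haniso hUn
  set f := μ⁻¹ • U ^ 2
  have hf : φ.IsSimilitude 1 f := by simpa [inv_pow, hμ] using (hU.pow 2).smul μ⁻¹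
  have hfn : f ^ n = 1 :=
    calc f ^ n = (μ ^ n)⁻¹ • (U ^ n) ^ 2 := by
          rw [smul_pow, inv_pow, ← pow_mul, ← pow_mul, mul_comm]
      _ = (μ ^ n)⁻¹ • μ ^ n • 1 := by rw [hUn, smul_pow, one_pow, hμn]
      _ = 1 := by rw [smul_smul, inv_mul_cancel₀ (pow_ne_zero n hμ), one_smul]
  have hf2 : f ^ 2 = 1 :=
    Module.End.pow_eq_one_of_forall_hasEigenvalue hζ (Nat.cast_ne_zero.2 hn.ne') hfn two_ne_zero
      fun r hr ↦ hf.sq_eq_of_hasEigenvalue haniso hr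
  have hU4 : U ^ 4 = μ ^ 2 • f ^ 2 := by
    rw [smul_pow, ← pow_mul, smul_smul, ← mul_pow, mul_inv_cancel₀ hμ, one_pow, one_smul]
  exact ⟨μ ^ 2, pow_ne_zero 2 hμ, fun x ↦ by rw [hpow, hU4, hf2]; rfl⟩

/-- Let `K` be a field of characteristic zero containing all roots of
unity, `V` a `K`-vector space of finite positive dimension, and `φ` a nondegenerate
symmetric anisotropic `K`-bilinear form on `V`. Let `u ∈ GO(V,φ)` be a similitude such
that there exist a positive integer `n` and `c ∈ K*` with `uⁿ = c·1_V` (i.e., the image of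
`u` in `PO(V,φ)` has finite order). Then there exists `c' ∈ K*` with `u⁴ = c'·1_V`, i.e.,
the image of `u` in `PO(V,φ)` has order dividing `4`. -/
theorem stmt6 {K V : Type*} [Field K] [CharZero K] [AddCommGroup V] [Module K V]
    [FiniteDimensional K V] (hdim : 0 < Module.finrank K V)
    (hroots : ∀ n : ℕ, 0 < n → ∃ ζ : K, IsPrimitiveRoot ζ n)
    (φ : LinearMap.BilinForm K V)
    (hsymm : ∀ x y : V, φ x y = φ y x)
    (hnondeg : ∀ x : V, (∀ y : V, φ x y = 0) → x = 0)
    (haniso : ∀ v : V, v ≠ 0 → φ v v ≠ 0)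
    (u : V ≃ₗ[K] V)
    (hGO : ∃ μ : K, μ ≠ 0 ∧ ∀ x y : V, φ (u x) (u y) = μ * φ x y)
    (hfin : ∃ n : ℕ, 0 < n ∧ ∃ c : K, c ≠ 0 ∧ ∀ x : V, (u ^ n) x = c • x) :
    ∃ c' : K, c' ≠ 0 ∧ ∀ x : V, (u ^ 4) x = c' • x :=
  stmt6_general hdim hroots φ haniso u hGO hfin
end
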